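/- arXiv:2507.15735 — 4 statements merged into one kernel-verified Lean document; each statement's English description precedes it below -/
import Mathlib

section
/- Let μ = (q, s) be an incentive-compatible mechanism for k additive goods, with q : ℝ₊^k → [0,1]^k and s : ℝ₊^k → ℝ. Then for every x, y ∈ ℝ₊^k and every λ > 1, we have s(x) ≤ s(λy) + (λ/(λ−1))·‖x − y‖₁. -/
/-- Scalar product on `ℝ^k`. -/
def dot {k : ℕ} (a b : Fin k → ℝ) : ℝ := ∑ i, a i * b i

/-- ℓ₁-norm on `ℝ^k`. -/
def l1 {k : ℕ} (z : Fin k → ℝ) : ℝ := ∑ i, |z i|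

/-- The allocation takes values in `[0,1]^k` (on the nonnegative orthant). -/
def InBox {k : ℕ} (q : (Fin k → ℝ) → (Fin k → ℝ)) : Prop :=
  ∀ x : Fin k → ℝ, 0 ≤ x → ∀ i, 0 ≤ q x i ∧ q x i ≤ 1

/-- Incentive compatibility on the nonnegative orthant. -/
def IC {k : ℕ} (q : (Fin k → ℝ) → (Fin k → ℝ)) (s : (Fin k → ℝ) → ℝ) : Prop :=
  ∀ x y : Fin k → ℝ, 0 ≤ x → 0 ≤ y →
    dot (q x) x - s x ≥ dot (q y) x - s y

/-- for an IC mechanism, `s(x) ≤ s(λy) + (λ/(λ−1))·‖x − y‖₁`. -/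
theorem payment_lipschitz_bound {k : ℕ}
    (q : (Fin k → ℝ) → (Fin k → ℝ)) (s : (Fin k → ℝ) → ℝ)
    (hq : InBox q) (hIC : IC q s)
    (x y : Fin k → ℝ) (hx : 0 ≤ x) (hy : 0 ≤ y)
    (lam : ℝ) (hlam : 1 < lam) :
    s x ≤ s (lam • y) + (lam / (lam - 1)) * l1 (x - y) := by
  have hlam0 : (0:ℝ) < lam := by linarith
  have hy' : (0:Fin k → ℝ) ≤ lam • y := by
    intro i
    exact mul_nonneg hlam0.le (hy i)
  have h1 := hIC x (lam • y) hx hy'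
  have h2 := hIC (lam • y) x hy' hx
  set A : Fin k → ℝ := fun i => q x i - q (lam • y) i with hA
  have hAbd : ∀ i, |A i| ≤ 1 := by
    intro i
    have e1 := hq x hx i
    have e2 := hq (lam • y) hy' i
    rw [abs_le]
    constructor <;> simp only [hA] <;> [linarith [e1.1, e2.2]; linarith [e1.2, e2.1]]
  set S1 : ℝ := ∑ i, A i * x i with hS1
  set S2 : ℝ := ∑ i, A i * y i with hS2
  set L : ℝ := l1 (x - y) with hL
  have h1' : s x - s (lam • y) ≤ S1 := by
    have : dot (q x) x - dot (q (lam • y)) x = S1 := by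
      simp [dot, hS1, hA, sub_mul, Finset.sum_sub_distrib]
    linarith [h1, this.symm.le]
  have h2' : lam * S2 ≤ s x - s (lam • y) := by
    have e : dot (q x) (lam • y) - dot (q (lam • y)) (lam • y) = lam * S2 := by
      simp only [dot, hS2, Pi.smul_apply, smul_eq_mul, Finset.mul_sum,
        ← Finset.sum_sub_distrib]
      apply Finset.sum_congr rfl
      intro i _
      simp [hA]; ring
    linarith [h2, e.le]
  have hdiff : S1 - S2 ≤ L := by
    rw [hS1, hS2, ← Finset.sum_sub_distrib, hL]
    unfold l1
    apply Finset.sum_le_sum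
    intro i _
    have hb := hAbd i
    calc A i * x i - A i * y i = A i * (x i - y i) := by ring
      _ ≤ |A i * (x i - y i)| := le_abs_self _
      _ = |A i| * |x i - y i| := abs_mul _ _
      _ ≤ 1 * |x i - y i| := by
          exact mul_le_mul_of_nonneg_right hb (abs_nonneg _)
      _ = |(x - y) i| := by simp
  set D : ℝ := s x - s (lam • y) with hD
  have hm1 : lam * D ≤ lam * S1 := mul_le_mul_of_nonneg_left h1' hlam0.le
  have hm2 : lam * S1 ≤ lam * (L + S2) :=
    mul_le_mul_of_nonneg_left (by linarith) hlam0.le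
  have key : D * (lam - 1) ≤ lam * L := by nlinarith
  have hd : D ≤ lam * L / (lam - 1) := (le_div_iff₀ (by linarith)).mpr key
  have e : lam / (lam - 1) * L = lam * L / (lam - 1) := by ring
  linarith [hd, e.le, e.ge]
end

section
/- Let r₁, r₂, w be nonnegative reals satisfying |√r₁ − √r₂| ≤ √w, max{r₁, r₂} ≤ M, and w ≤ M. Then |r₁ − r₂| ≤ 2√(M·w) − w. -/
lemma rev_diff_aux (r1 r2 w M : ℝ) (hr1 : 0 ≤ r1) (hr2 : 0 ≤ r2) (hw : 0 ≤ w)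
    (h : Real.sqrt r1 - Real.sqrt r2 ≤ Real.sqrt w)
    (hM1 : r1 ≤ M) (hwM : w ≤ M) :
    r1 - r2 ≤ 2 * Real.sqrt (M * w) - w := by
  have hM0 : 0 ≤ M := le_trans hw hwM
  have hwM' : w ≤ Real.sqrt (M * w) := by
    calc w = Real.sqrt (w * w) := by rw [Real.sqrt_mul_self hw]
    _ ≤ Real.sqrt (M * w) := Real.sqrt_le_sqrt (by nlinarith)
  by_cases hc : r1 ≤ w
  · nlinarith
  · have h2 : 0 ≤ Real.sqrt r1 - Real.sqrt w := by
      have := Real.sqrt_le_sqrt (le_of_lt (lt_of_not_ge hc))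
      linarith
    have h3 : (Real.sqrt r1 - Real.sqrt w) ^ 2 ≤ r2 := by
      nlinarith [Real.sq_sqrt hr2, Real.sqrt_nonneg r2]
    have e1 : Real.sqrt r1 ^ 2 = r1 := Real.sq_sqrt hr1
    have e2 : Real.sqrt w ^ 2 = w := Real.sq_sqrt hw
    have h4 : Real.sqrt r1 * Real.sqrt w ≤ Real.sqrt (M * w) := by
      rw [← Real.sqrt_mul hr1]
      exact Real.sqrt_le_sqrt (by nlinarith)
    nlinarith

/-- if `|√r₁ − √r₂| ≤ √w`, `max{r₁, r₂} ≤ M`, and `w ≤ M`, then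
`|r₁ − r₂| ≤ 2√(Mw) − w`. -/
theorem rev_diff_bound_max (r1 r2 w M : ℝ)
    (hr1 : 0 ≤ r1) (hr2 : 0 ≤ r2) (hw : 0 ≤ w)
    (hsqrt : |Real.sqrt r1 - Real.sqrt r2| ≤ Real.sqrt w)
    (hM : max r1 r2 ≤ M) (hwM : w ≤ M) :
    |r1 - r2| ≤ 2 * Real.sqrt (M * w) - w := by
  rw [abs_sub_le_iff] at hsqrt
  rw [abs_sub_le_iff]
  rw [max_le_iff] at hM
  exact ⟨rev_diff_aux r1 r2 w M hr1 hr2 hw hsqrt.1 hM.1 hwM,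
    rev_diff_aux r2 r1 w M hr2 hr1 hw hsqrt.2 hM.2 hwM⟩
end

section
/- Let M > 0, 0 < δ < M, and set η = √(δ/M) ∈ (0,1). Suppose a mechanism μ satisfies R(μ; X) ≤ M for a k-good valuation X, and Y is a k-good valuation with W(X, Y) ≤ δ, where both X and Y are defined on a common space with E[‖X − Y‖₁] ≤ δ. Then the η-discounted mechanism μ_{1−η}, defined by q_{1−η}(x) = q(x/(1−η)) and s_{1−η}(x) = (1−η)·s(x/(1−η)), satisfies R(μ_{1−η}; Y) ≥ R(μ; X) − (2√(Mδ) − δ). -/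
open MeasureTheory

/-- Individual rationality on the nonnegative orthant. -/
def IR {k : ℕ} (q : (Fin k → ℝ) → (Fin k → ℝ)) (s : (Fin k → ℝ) → ℝ) : Prop :=
  ∀ x : Fin k → ℝ, 0 ≤ x → dot (q x) x - s x ≥ 0

lemma key_pointwise {k : ℕ} (q : (Fin k → ℝ) → (Fin k → ℝ)) (s : (Fin k → ℝ) → ℝ)
    (hq : InBox q) (hIC : IC q s) {x y : Fin k → ℝ} (hx : 0 ≤ x) (hy : 0 ≤ y)
    {eta : ℝ} (h0 : 0 < eta) (h1 : eta < 1) :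
    eta * (s x - s ((1 - eta)⁻¹ • y)) ≤ l1 (x - y) := by
  set c : ℝ := (1 - eta)⁻¹ with hc
  have hcpos : 0 < c := by rw [hc]; exact inv_pos.mpr (by linarith)
  set z : Fin k → ℝ := c • y with hz
  have hznn : 0 ≤ z := fun i => mul_nonneg hcpos.le (hy i)
  have h1' := hIC x z hx hznn
  have h2' := hIC z x hznn hx
  -- bound on the cross term
  have hcross : ∑ i, (q x i - q z i) * (x i - y i) ≤ l1 (x - y) := by
    apply Finset.sum_le_sum
    intro i _
    have hq1 := hq x hx i
    have hq2 := hq z hznn i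
    have habs : |q x i - q z i| ≤ 1 := by
      rw [abs_le]; constructor <;> linarith [hq1.1, hq1.2, hq2.1, hq2.2]
    calc (q x i - q z i) * (x i - y i) ≤ |(q x i - q z i) * (x i - y i)| := le_abs_self _
      _ = |q x i - q z i| * |x i - y i| := abs_mul _ _
      _ ≤ 1 * |x i - y i| := by
          exact mul_le_mul_of_nonneg_right habs (abs_nonneg _)
      _ = |(x - y) i| := by simp [Pi.sub_apply]
  -- linearity facts
  have hdxz : dot (q x) z = c * dot (q x) y := by
    simp only [dot, hz, Finset.mul_sum, Pi.smul_apply, smul_eq_mul]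
    exact Finset.sum_congr rfl fun i _ => by ring
  have hdzz : dot (q z) z = c * dot (q z) y := by
    simp only [dot, hz, Finset.mul_sum, Pi.smul_apply, smul_eq_mul]
    exact Finset.sum_congr rfl fun i _ => by ring
  have hsplit : dot (q x) x - dot (q z) x
      = (dot (q x) y - dot (q z) y) + ∑ i, (q x i - q z i) * (x i - y i) := by
    unfold dot
    rw [← Finset.sum_sub_distrib, ← Finset.sum_sub_distrib, ← Finset.sum_add_distrib]
    exact Finset.sum_congr rfl fun i _ => by ring
  -- from h2': dot (q x) y - dot (q z) y ≤ (1 - eta) * (s x - s z)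
  have h2'' : c * (dot (q x) y - dot (q z) y) ≤ s x - s z := by
    have : dot (q z) z - s z ≥ dot (q x) z - s x := h2'
    rw [hdxz, hdzz] at this
    nlinarith
  have hkey : dot (q x) y - dot (q z) y ≤ (1 - eta) * (s x - s z) := by
    have hcne : c ≠ 0 := hcpos.ne'
    have h1e : (1 - eta) * c = 1 := by
      rw [hc]; exact mul_inv_cancel₀ (by linarith)
    have h := mul_le_mul_of_nonneg_left h2'' (show (0:ℝ) ≤ 1 - eta by linarith)
    calc dot (q x) y - dot (q z) y
        = (1 - eta) * (c * (dot (q x) y - dot (q z) y)) := by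
          rw [← mul_assoc, h1e, one_mul]
      _ ≤ (1 - eta) * (s x - s z) := h
  -- combine
  have hfin : s x - s z ≤ (1 - eta) * (s x - s z) + l1 (x - y) := by
    have : s x - s z ≤ dot (q x) x - dot (q z) x := by linarith [h1']
    rw [hsplit] at this
    linarith
  nlinarith

/-- for `η = √(δ/M)`, the η-discounted mechanism
`s_{1−η}(x) = (1−η)·s(x/(1−η))` extracts from `Y` at least
`R(μ; X) − (2√(Mδ) − δ)`, whenever `E[‖X − Y‖₁] ≤ δ` and `R(μ; X) ≤ M`. -/
theorem discount_revenue_guarantee {k : ℕ}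
    {Ω : Type*} [MeasurableSpace Ω] (P : Measure Ω) [IsProbabilityMeasure P]
    (q : (Fin k → ℝ) → (Fin k → ℝ)) (s : (Fin k → ℝ) → ℝ)
    (hq : InBox q) (hIC : IC q s) (hIR : IR q s)
    (X Y : Ω → Fin k → ℝ) (hX : ∀ ω, 0 ≤ X ω) (hY : ∀ ω, 0 ≤ Y ω)
    (M del : ℝ) (hM : 0 < M) (hdel : 0 < del) (hdelM : del < M)
    (eta : ℝ) (heta : eta = Real.sqrt (del / M))
    (hW : Integrable (fun ω => l1 (X ω - Y ω)) P)
    (hWle : ∫ ω, l1 (X ω - Y ω) ∂P ≤ del)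
    (hsX : Integrable (fun ω => s (X ω)) P)
    (hRX : ∫ ω, s (X ω) ∂P ≤ M)
    (hsY : Integrable (fun ω => (1 - eta) * s ((1 - eta)⁻¹ • Y ω)) P) :
    ∫ ω, (1 - eta) * s ((1 - eta)⁻¹ • Y ω) ∂P ≥
      (∫ ω, s (X ω) ∂P) - (2 * Real.sqrt (M * del) - del) := by
  have hdM : (0:ℝ) < del / M := div_pos hdel hM
  have h0 : 0 < eta := heta ▸ Real.sqrt_pos.mpr hdM
  have hsq : eta ^ 2 = del / M := by
    rw [heta, sq, Real.mul_self_sqrt hdM.le]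
  have h1 : eta < 1 := by nlinarith [div_lt_one hM |>.mpr hdelM]
  have hMd : Real.sqrt (M * del) = eta * M := by
    rw [show M * del = (eta * M)^2 by field_simp at hsq ⊢; nlinarith]
    exact Real.sqrt_sq (by positivity)
  -- integrability of g
  set g : Ω → ℝ := fun ω => s ((1 - eta)⁻¹ • Y ω) with hg
  have h1e : (1 : ℝ) - eta ≠ 0 := by linarith
  have hgint : Integrable g P := by
    have := hsY.const_mul (1 - eta)⁻¹
    simpa [hg, ← mul_assoc, inv_mul_cancel₀ h1e] using this
  -- pointwise bound integrated
  have hpt : ∀ ω, eta * (s (X ω) - g ω) ≤ l1 (X ω - Y ω) := fun ω =>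
    key_pointwise q s hq hIC (hX ω) (hY ω) h0 h1
  have hintle : ∫ ω, eta * (s (X ω) - g ω) ∂P ≤ ∫ ω, l1 (X ω - Y ω) ∂P := by
    apply integral_mono _ hW hpt
    exact ((hsX.sub hgint).const_mul eta)
  have hints : ∫ ω, eta * (s (X ω) - g ω) ∂P
      = eta * ((∫ ω, s (X ω) ∂P) - ∫ ω, g ω ∂P) := by
    rw [integral_const_mul, integral_sub hsX hgint]
  set R := ∫ ω, s (X ω) ∂P
  set G := ∫ ω, g ω ∂P
  have hRG : eta * (R - G) ≤ del := by
    rw [hints] at hintle; linarith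
  have hlhs : ∫ ω, (1 - eta) * s ((1 - eta)⁻¹ • Y ω) ∂P = (1 - eta) * G := by
    simp only [hg, G]
    rw [integral_const_mul]
  rw [hlhs, hMd]
  have hdel' : del = eta ^ 2 * M := by field_simp at hsq; linarith
  nlinarith [mul_le_mul_of_nonneg_left hRX h0.le]
end

section
/- Let Γ ⊂ ℝ^k be nonempty and compact, let μ = (q, s) be a Γ-mechanism (q : ℝ₊^k → Γ) satisfying IC. Then for every x, y ∈ ℝ₊^k and λ > 1, s(x) ≤ s(λy) + (λ/(λ−1))·ρ_Γ(x − y), where ρ_Γ(z) = max_{g∈Γ} g·z − min_{g∈Γ} g·z. -/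
/-- The dual Γ-seminorm `ρ_Γ(z) = max_{g∈Γ} g·z − min_{g∈Γ} g·z`. -/
noncomputable def rho {k : ℕ} (Γ : Set (Fin k → ℝ)) (z : Fin k → ℝ) : ℝ :=
  sSup ((fun g => dot g z) '' Γ) - sInf ((fun g => dot g z) '' Γ)

lemma dot_smul_right {k : ℕ} (a b : Fin k → ℝ) (c : ℝ) :
    dot a (c • b) = c * dot a b := by
  simp only [dot, Finset.mul_sum, Pi.smul_apply, smul_eq_mul]
  exact Finset.sum_congr rfl fun i _ => by ring

lemma dot_sub_right {k : ℕ} (a b c : Fin k → ℝ) :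
    dot a (b - c) = dot a b - dot a c := by
  simp [dot, ← Finset.sum_sub_distrib]; ring_nf

lemma dot_cont {k : ℕ} (z : Fin k → ℝ) : Continuous (fun g : Fin k → ℝ => dot g z) := by
  unfold dot
  exact continuous_finset_sum _ fun i _ => (continuous_apply i).mul continuous_const

/-- for an IC Γ-mechanism (with `Γ` nonempty compact),
`s(x) ≤ s(λy) + (λ/(λ−1))·ρ_Γ(x − y)`. -/
theorem gamma_payment_bound {k : ℕ} (Γ : Set (Fin k → ℝ))
    (hne : Γ.Nonempty) (hcomp : IsCompact Γ)
    (q : (Fin k → ℝ) → (Fin k → ℝ)) (s : (Fin k → ℝ) → ℝ)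
    (hq : ∀ x : Fin k → ℝ, 0 ≤ x → q x ∈ Γ) (hIC : IC q s)
    (x y : Fin k → ℝ) (hx : 0 ≤ x) (hy : 0 ≤ y)
    (lam : ℝ) (hlam : 1 < lam) :
    s x ≤ s (lam • y) + (lam / (lam - 1)) * rho Γ (x - y) := by
  have hlam0 : (0:ℝ) < lam := by linarith
  have hly : 0 ≤ lam • y := by
    intro i; exact mul_nonneg hlam0.le (hy i)
  set a := q x with ha
  set b := q (lam • y) with hb
  have haΓ : a ∈ Γ := hq x hx
  have hbΓ : b ∈ Γ := hq _ hly
  -- IC inequalities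
  have h1 : s x - s (lam • y) ≤ dot a x - dot b x := by
    have := hIC x (lam • y) hx hly
    linarith
  have h2 : dot a (lam • y) - dot b (lam • y) ≤ s x - s (lam • y) := by
    have := hIC (lam • y) x hly hx
    linarith
  rw [dot_smul_right, dot_smul_right] at h2
  -- bound on rho
  have himg : IsCompact ((fun g => dot g (x - y)) '' Γ) :=
    hcomp.image (dot_cont (x - y))
  have hbdda : BddAbove ((fun g => dot g (x - y)) '' Γ) := himg.bddAbove
  have hbddb : BddBelow ((fun g => dot g (x - y)) '' Γ) := himg.bddBelow
  have hle : dot a (x - y) ≤ sSup ((fun g => dot g (x - y)) '' Γ) :=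
    le_csSup hbdda ⟨a, haΓ, rfl⟩
  have hge : sInf ((fun g => dot g (x - y)) '' Γ) ≤ dot b (x - y) :=
    csInf_le hbddb ⟨b, hbΓ, rfl⟩
  have hrho : dot a (x - y) - dot b (x - y) ≤ rho Γ (x - y) := by
    unfold rho; linarith
  rw [dot_sub_right, dot_sub_right] at hrho
  -- algebra
  set u := dot a x - dot b x
  set v := dot a y - dot b y
  have huv : u - v ≤ rho Γ (x - y) := by dsimp [u, v]; linarith
  have hlv : lam * v ≤ s x - s (lam • y) := by dsimp [v]; linarith
  have key : u ≤ (lam / (lam - 1)) * rho Γ (x - y) := by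
    have hl1 : (0:ℝ) < lam - 1 := by linarith
    have h3 : lam * (u - v) ≤ lam * rho Γ (x - y) :=
      mul_le_mul_of_nonneg_left huv hlam0.le
    rw [div_mul_eq_mul_div, le_div_iff₀ hl1]
    nlinarith [h3, hlv, h1]
  have hfin := h1.trans key
  linarith [hfin]
end
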